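/- Let $(Q,\mu)$ be a finite measure space, $m < M$, $\alpha > 0$, $g \in L^2(Q)$, and let $u$ be measurable with $m \le u \le M$ a.e. and $\int_Q (\alpha u + g)(v - u)\,d\mu \ge 0$ for all measurable $v$ with $m \le v \le M$ a.e. Then a.e.: $u = m$ on $\{\alpha u + g > 0\}$, $u = M$ on $\{\alpha u + g < 0\}$, and hence $u = \min(\max(m, -g/\alpha), M)$ a.e. -/

import Mathlib

/-!
Testing the variational inequality with `v = m` on `{α u + g > 0}` and `v = u` elsewhere gives
`∫_{α u + g > 0} (α u + g)(m - u) ≥ 0`, while the integrand is `≤ 0` there because `u ≥ m`; hence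
it vanishes a.e., i.e. `u = m` a.e. on that set. Symmetrically `u = M` a.e. on `{α u + g < 0}`,
and on `{α u + g = 0}` we have `u = -g / α`; together these say `u` is the clamp of `-g / α`.
Integrability of `(α u + g)(m - u)` (from `g ∈ L² ⊆ L¹` and `u` bounded) is essential: the
Bochner integral of a non-integrable function is `0`, which would make the test vacuous.
-/

open MeasureTheory Set

section

variable {Q : Type*} [MeasurableSpace Q] {μ : Measure Q}

def VariationalIneq (μ : Measure Q) (K : Set ℝ) (w u : Q → ℝ) : Prop :=
  ∀ v : Q → ℝ, Measurable v → (∀ᵐ x ∂μ, v x ∈ K) → 0 ≤ ∫ x, w x * (v x - u x) ∂μ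

theorem ae_eq_zero_of_nonpos_of_integral_nonneg {f : Q → ℝ} (hf : f ≤ᵐ[μ] 0)
    (hfi : Integrable f μ) (h : 0 ≤ ∫ x, f x ∂μ) : f =ᵐ[μ] 0 := by
  have hneg : ∫ x, -f x ∂μ = 0 :=
    by rw [integral_neg, le_antisymm (integral_nonpos_of_ae hf) h, neg_zero]
  have := (integral_eq_zero_iff_of_nonneg_ae (by filter_upwards [hf] with x hx; exact neg_nonneg.2 hx) hfi.neg).1 hneg
  filter_upwards [this] with x hx
  simpa using hx

theorem MeasureTheory.Integrable.mul_const_sub_of_ae_mem_Icc {w u : Q → ℝ} {m M c : ℝ} (hw : Integrable w μ)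
    (hu : AEStronglyMeasurable u μ) (huK : ∀ᵐ x ∂μ, u x ∈ Icc m M) (hc : c ∈ Icc m M) :
    Integrable (fun x => w x * (c - u x)) μ := by
  refine hw.mul_bdd (aestronglyMeasurable_const.sub hu) (c := M - m) ?_
  filter_upwards [huK] with x hx
  rw [← dist_eq_norm]
  exact Real.dist_le_of_mem_Icc hc hx

namespace VariationalIneq

variable {K : Set ℝ} {w u : Q → ℝ}

theorem ae_mul_sub_eq_zero (h : VariationalIneq μ K w u) (hu : Measurable u)
    (huK : ∀ᵐ x ∂μ, u x ∈ K) {c : ℝ} (hc : c ∈ K) {S : Set Q} (hS : MeasurableSet S)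
    (hint : Integrable (fun x => w x * (c - u x)) μ)
    (hsign : ∀ᵐ x ∂μ, x ∈ S → w x * (c - u x) ≤ 0) :
    ∀ᵐ x ∂μ, x ∈ S → w x * (c - u x) = 0 := by
  classical
  set f := S.indicator fun x => w x * (c - u x)
  have hv : ∀ᵐ x ∂μ, S.piecewise (fun _ => c) u x ∈ K := by
    filter_upwards [huK] with x hx
    by_cases hxS : x ∈ S <;> simp [hxS, hc, hx]
  have hf_eq : (fun x => w x * (S.piecewise (fun _ => c) u x - u x)) = f := by
    ext x
    by_cases hxS : x ∈ S <;> simp [f, hxS]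
  have hf_nonpos : f ≤ᵐ[μ] 0 := by
    filter_upwards [hsign] with x hx
    by_cases hxS : x ∈ S
    · simpa [f, hxS] using hx hxS
    · simp [f, hxS]
  have hf_int : 0 ≤ ∫ x, f x ∂μ := hf_eq ▸ h _ (measurable_const.piecewise hS hu) hv
  filter_upwards [ae_eq_zero_of_nonpos_of_integral_nonneg hf_nonpos (hint.indicator hS) hf_int]
    with x hx hxS
  simpa [f, hxS] using hx

variable {m M : ℝ}

theorem ae_eq_left_of_pos (h : VariationalIneq μ (Icc m M) w u) (hmM : m ≤ M)
    (hu : Measurable u) (hw : Measurable w) (hwi : Integrable w μ)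
    (huK : ∀ᵐ x ∂μ, u x ∈ Icc m M) : ∀ᵐ x ∂μ, 0 < w x → u x = m := by
  have hc : m ∈ Icc m M := ⟨le_rfl, hmM⟩
  have hsign : ∀ᵐ x ∂μ, x ∈ {x | 0 < w x} → w x * (m - u x) ≤ 0 := by
    filter_upwards [huK] with x hx hpos
    exact mul_nonpos_of_nonneg_of_nonpos (le_of_lt hpos) (sub_nonpos.2 hx.1)
  filter_upwards [h.ae_mul_sub_eq_zero hu huK hc (measurableSet_lt measurable_const hw)
    (hwi.mul_const_sub_of_ae_mem_Icc hu.aestronglyMeasurable huK hc) hsign] with x hx hpos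
  exact (sub_eq_zero.1 ((mul_eq_zero.1 (hx hpos)).resolve_left hpos.ne')).symm

theorem ae_eq_right_of_neg (h : VariationalIneq μ (Icc m M) w u) (hmM : m ≤ M)
    (hu : Measurable u) (hw : Measurable w) (hwi : Integrable w μ)
    (huK : ∀ᵐ x ∂μ, u x ∈ Icc m M) : ∀ᵐ x ∂μ, w x < 0 → u x = M := by
  have hc : M ∈ Icc m M := ⟨hmM, le_rfl⟩
  have hsign : ∀ᵐ x ∂μ, x ∈ {x | w x < 0} → w x * (M - u x) ≤ 0 := by
    filter_upwards [huK] with x hx hneg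
    exact mul_nonpos_of_nonpos_of_nonneg (le_of_lt hneg) (sub_nonneg.2 hx.2)
  filter_upwards [h.ae_mul_sub_eq_zero hu huK hc (measurableSet_lt hw measurable_const)
    (hwi.mul_const_sub_of_ae_mem_Icc hu.aestronglyMeasurable huK hc) hsign] with x hx hneg
  exact (sub_eq_zero.1 ((mul_eq_zero.1 (hx hneg)).resolve_left hneg.ne)).symm

end VariationalIneq

end

theorem eq_min_max_div_of_sign {m M α g u : ℝ} (hα : 0 < α) (hu : u ∈ Icc m M)
    (hpos : 0 < α * u + g → u = m) (hneg : α * u + g < 0 → u = M) :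
    u = min (max m (-g / α)) M := by
  rcases lt_trichotomy (α * u + g) 0 with h | h | h
  · have hM : M ≤ -g / α := by
      rw [le_div_iff₀ hα]
      linarith [hneg h ▸ h]
    rw [max_eq_right ((hu.1.trans hu.2).trans hM), min_eq_right hM, hneg h]
  · have hux : u = -g / α := by
      field_simp
      linarith
    rw [← hux, max_eq_right hu.1, min_eq_left hu.2]
  · have hm : -g / α ≤ m := by
      rw [div_le_iff₀ hα]
      linarith [hpos h ▸ h]
    rw [max_eq_left hm, min_eq_left (hu.1.trans hu.2), hpos h]

/-- the integral variational inequality forces the pointwise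
projection structure. -/
theorem variational_implies_projection {Q : Type*} [MeasureSpace Q]
    [IsFiniteMeasure (volume : Measure Q)]
    (m M α : ℝ) (hm : m < M) (hα : 0 < α)
    (g : Q → ℝ) (hg : MemLp g 2 volume)
    (u : Q → ℝ) (humeas : Measurable u)
    (hbounds : ∀ᵐ x ∂(volume : Measure Q), m ≤ u x ∧ u x ≤ M)
    (hVI : ∀ v : Q → ℝ, Measurable v →
      (∀ᵐ x ∂(volume : Measure Q), m ≤ v x ∧ v x ≤ M) →
      0 ≤ ∫ x, (α * u x + g x) * (v x - u x)) :
    ∀ᵐ x ∂(volume : Measure Q),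
      (0 < α * u x + g x → u x = m) ∧
      (α * u x + g x < 0 → u x = M) ∧
      u x = min (max m (-g x / α)) M := by
  obtain ⟨g', hg'_meas, hgg'⟩ := hg.aestronglyMeasurable.aemeasurable
  set w := fun x => α * u x + g' x
  have hw : ∀ᵐ x, α * u x + g x = w x := by
    filter_upwards [hgg'] with x hx
    simp [w, hx]
  have hu_int : Integrable u := Integrable.of_bound humeas.aestronglyMeasurable (max |m| |M|)
    (by filter_upwards [hbounds] with x hx; exact abs_le_max_abs_abs hx.1 hx.2)
  have hw_int : Integrable w :=
    (hu_int.const_mul α).add ((hg.integrable one_le_two).congr hgg')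
  have hw_meas : Measurable w := (humeas.const_mul α).add hg'_meas
  have hVIw : VariationalIneq volume (Icc m M) w u := fun v hv hvK =>
    (integral_congr_ae (by filter_upwards [hw] with x hx; rw [hx])).le.trans' (hVI v hv hvK)
  filter_upwards [hbounds, hw, hVIw.ae_eq_left_of_pos hm.le humeas hw_meas hw_int hbounds,
    hVIw.ae_eq_right_of_neg hm.le humeas hw_meas hw_int hbounds] with x hx hwx hpos hneg
  rw [hwx]
  exact ⟨hpos, hneg, eq_min_max_div_of_sign hα hx (hwx ▸ hpos) (hwx ▸ hneg)⟩
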